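/- arXiv:1010.3726 — 2 statements merged into one kernel-verified Lean document; each statement's English description precedes it below -/
import Mathlib

section
/- Let (X_i, Y_i, Z_i), i=1,...,n, be i.i.d. with joint pmf p(x)p(y|x)p(z|y), and let M2 be any function of (X^n, Y^n). Define U_i = (M2, X^{i-1}, Y^{i-1}, Z_{i+1}^n). Then the Markov chain Z^{i-1} - (U_i, Z_i) - (X_i, Y_i) holds, i.e., I(X_i, Y_i; Z^{i-1} | U_i, Z_i) = 0. -/
open Finset

open Classical in
/-- Probability of an event under a pmf `p` on a finite sample space. -/
noncomputable def pr {Ω : Type*} [Fintype Ω] (p : Ω → ℝ) (E : Ω → Prop) : ℝ :=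
  ∑ ω, if E ω then p ω else 0

/-- Shannon entropy (base 2) of a discrete random variable. -/
noncomputable def entH {Ω α : Type*} [Fintype Ω] [Fintype α] (p : Ω → ℝ) (X : Ω → α) : ℝ :=
  -∑ x, pr p (fun ω => X ω = x) * Real.logb 2 (pr p (fun ω => X ω = x))

/-- Conditional Shannon entropy H(X|Y) (base 2). -/
noncomputable def condH {Ω α β : Type*} [Fintype Ω] [Fintype α] [Fintype β]
    (p : Ω → ℝ) (X : Ω → α) (Y : Ω → β) : ℝ :=
  -∑ x, ∑ y, pr p (fun ω => X ω = x ∧ Y ω = y) *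
      Real.logb 2 (pr p (fun ω => X ω = x ∧ Y ω = y) / pr p (fun ω => Y ω = y))

/-- Mutual information I(X;Y) (base 2). -/
noncomputable def mutI {Ω α β : Type*} [Fintype Ω] [Fintype α] [Fintype β]
    (p : Ω → ℝ) (X : Ω → α) (Y : Ω → β) : ℝ :=
  ∑ x, ∑ y, pr p (fun ω => X ω = x ∧ Y ω = y) *
      Real.logb 2 (pr p (fun ω => X ω = x ∧ Y ω = y) /
        (pr p (fun ω => X ω = x) * pr p (fun ω => Y ω = y)))

/-- Conditional mutual information I(X;Y|Z) (base 2). -/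
noncomputable def condMI {Ω α β γ : Type*} [Fintype Ω] [Fintype α] [Fintype β] [Fintype γ]
    (p : Ω → ℝ) (X : Ω → α) (Y : Ω → β) (Z : Ω → γ) : ℝ :=
  ∑ x, ∑ y, ∑ z,
    pr p (fun ω => X ω = x ∧ Y ω = y ∧ Z ω = z) *
      Real.logb 2
        ((pr p (fun ω => X ω = x ∧ Y ω = y ∧ Z ω = z) * pr p (fun ω => Z ω = z)) /
          (pr p (fun ω => X ω = x ∧ Z ω = z) * pr p (fun ω => Y ω = y ∧ Z ω = z)))

/-!
Given `X^{i-1}, Y^{i-1}`, the past outputs `Z^{i-1}` are independent of all other coordinates,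
because the pmf is a product over time. Concretely, exchanging the `Z^{i-1}`-parts of two sequences
with the same value of `(U_i, Z_i)` preserves the product of their probabilities: both sequences
agree on `X^{i-1}, Y^{i-1}`, so the exchange only permutes the factors `q (x_j, y_j, z_j)`. Summing
this symmetry over pairs of sequences gives `P(a, b, c) P(c) = P(a, c) P(b, c)`, so every term
of the conditional mutual information vanishes.
-/

section Exchange

variable {Ω α β γ : Type*} [Fintype Ω] [Fintype α] [Fintype β] [Fintype γ]

lemma condMI_eq_zero_of_factorization (p : Ω → ℝ) (X : Ω → α) (Y : Ω → β) (Z : Ω → γ)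
    (h : ∀ x y z, pr p (fun ω => X ω = x ∧ Y ω = y ∧ Z ω = z) * pr p (fun ω => Z ω = z)
        = pr p (fun ω => X ω = x ∧ Z ω = z) * pr p (fun ω => Y ω = y ∧ Z ω = z)) :
    condMI p X Y Z = 0 := by
  refine sum_eq_zero fun x _ => sum_eq_zero fun y _ => sum_eq_zero fun z _ => ?_
  rw [h x y z]
  rcases eq_or_ne (pr p (fun ω => X ω = x ∧ Z ω = z) * pr p (fun ω => Y ω = y ∧ Z ω = z)) 0
    with hzero | hne
  · simp [hzero]
  · simp [div_self hne]

open Classical in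
lemma pr_mul_pr (p : Ω → ℝ) (E F : Ω → Prop) :
    pr p E * pr p F =
      ∑ w : Ω × Ω, (if E w.1 then p w.1 else 0) * (if F w.2 then p w.2 else 0) := by
  rw [Fintype.sum_prod_type, pr, pr, sum_mul_sum]

/-- `splice ω ω'` is `ω` with its `Y`-part taken from `ω'`. -/
lemma condMI_eq_zero_of_splice (p : Ω → ℝ) (X : Ω → α) (Y : Ω → β) (Z : Ω → γ)
    (splice : Ω → Ω → Ω)
    (hX : ∀ ω ω', X (splice ω ω') = X ω) (hY : ∀ ω ω', Y (splice ω ω') = Y ω')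
    (hZ : ∀ ω ω', Z (splice ω ω') = Z ω)
    (hinv : ∀ ω ω', splice (splice ω ω') (splice ω' ω) = ω)
    (hp : ∀ ω ω', Z ω = Z ω' → p (splice ω ω') * p (splice ω' ω) = p ω * p ω') :
    condMI p X Y Z = 0 := by
  classical
  refine condMI_eq_zero_of_factorization p X Y Z fun x y z => ?_
  let σ : Ω × Ω → Ω × Ω := fun w => (splice w.1 w.2, splice w.2 w.1)
  have hσ : Function.Involutive σ := fun w => Prod.ext (hinv w.1 w.2) (hinv w.2 w.1)
  rw [pr_mul_pr, pr_mul_pr]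
  refine Fintype.sum_bijective σ hσ.bijective _ _ fun ⟨ω, ω'⟩ => ?_
  simp only [σ, hX, hY, hZ]
  by_cases hω : Z ω = z <;> by_cases hω' : Z ω' = z
  · by_cases hx : X ω = x <;> simp [hx, hω, hω', hp ω ω' (hω.trans hω'.symm)]
  all_goals simp [hω, hω']

end Exchange

section SpliceZ

variable {𝒳 𝒴 𝒵 : Type*} {n : ℕ}

def spliceZBefore (i : Fin n) (ω ω' : Fin n → 𝒳 × 𝒴 × 𝒵) : Fin n → 𝒳 × 𝒴 × 𝒵 :=
  fun j => if j < i then ((ω j).1, (ω j).2.1, (ω' j).2.2) else ω j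

lemma spliceZBefore_of_lt {i j : Fin n} (h : j < i) (ω ω' : Fin n → 𝒳 × 𝒴 × 𝒵) :
    spliceZBefore i ω ω' j = ((ω j).1, (ω j).2.1, (ω' j).2.2) := if_pos h

lemma spliceZBefore_of_not_lt {i j : Fin n} (h : ¬ j < i) (ω ω' : Fin n → 𝒳 × 𝒴 × 𝒵) :
    spliceZBefore i ω ω' j = ω j := if_neg h

@[simp]
lemma fst_spliceZBefore (i j : Fin n) (ω ω' : Fin n → 𝒳 × 𝒴 × 𝒵) :
    (spliceZBefore i ω ω' j).1 = (ω j).1 := by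
  unfold spliceZBefore; split_ifs <;> rfl

@[simp]
lemma snd_fst_spliceZBefore (i j : Fin n) (ω ω' : Fin n → 𝒳 × 𝒴 × 𝒵) :
    (spliceZBefore i ω ω' j).2.1 = (ω j).2.1 := by
  unfold spliceZBefore; split_ifs <;> rfl

lemma spliceZBefore_spliceZBefore (i : Fin n) (ω ω' : Fin n → 𝒳 × 𝒴 × 𝒵) :
    spliceZBefore i (spliceZBefore i ω ω') (spliceZBefore i ω' ω) = ω := by
  funext j
  by_cases h : j < i
  · simp [spliceZBefore_of_lt h]
  · simp [spliceZBefore_of_not_lt h]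

lemma prod_spliceZBefore_mul (q : 𝒳 × 𝒴 × 𝒵 → ℝ) (i : Fin n) {ω ω' : Fin n → 𝒳 × 𝒴 × 𝒵}
    (h : ∀ j < i, (ω j).1 = (ω' j).1 ∧ (ω j).2.1 = (ω' j).2.1) :
    (∏ j, q (spliceZBefore i ω ω' j)) * ∏ j, q (spliceZBefore i ω' ω j)
      = (∏ j, q (ω j)) * ∏ j, q (ω' j) := by
  rw [← prod_mul_distrib, ← prod_mul_distrib]
  refine prod_congr rfl fun j _ => ?_
  by_cases hj : j < i
  · obtain ⟨hx, hy⟩ := h j hj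
    have e₁ : ((ω j).1, (ω j).2.1, (ω' j).2.2) = ω' j := Prod.ext hx (Prod.ext hy rfl)
    have e₂ : ((ω' j).1, (ω' j).2.1, (ω j).2.2) = ω j := Prod.ext hx.symm (Prod.ext hy.symm rfl)
    rw [spliceZBefore_of_lt hj, spliceZBefore_of_lt hj, e₁, e₂, mul_comm]
  · rw [spliceZBefore_of_not_lt hj, spliceZBefore_of_not_lt hj]

end SpliceZ

theorem stmt_6_general {𝒳 𝒴 𝒵 μ : Type*} [Fintype 𝒳] [Fintype 𝒴] [Fintype 𝒵] [Fintype μ]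
    (n : ℕ) (q : 𝒳 × 𝒴 × 𝒵 → ℝ)
    (m2 : (Fin n → 𝒳 × 𝒴) → μ) (i : Fin n) :
    condMI (fun ω : Fin n → 𝒳 × 𝒴 × 𝒵 => ∏ j, q (ω j))
      (fun ω => ((ω i).1, (ω i).2.1))
      (fun ω => (fun j : {j : Fin n // j < i} => (ω j.1).2.2))
      (fun ω => ((m2 (fun j => ((ω j).1, (ω j).2.1)),
                  (fun j : {j : Fin n // j < i} => ((ω j.1).1, (ω j.1).2.1)),
                  (fun j : {j : Fin n // i < j} => (ω j.1).2.2)),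
                 (ω i).2.2)) = 0 := by
  refine condMI_eq_zero_of_splice _ _ _ _ (spliceZBefore i) (fun ω ω' => ?_) (fun ω ω' => ?_)
    (fun ω ω' => ?_) (spliceZBefore_spliceZBefore i) (fun ω ω' hZ => ?_)
  · rw [spliceZBefore_of_not_lt (lt_irrefl i)]
  · funext j
    rw [spliceZBefore_of_lt j.2]
  · have hafter : (fun j : {j : Fin n // i < j} => (spliceZBefore i ω ω' j.1).2.2)
        = fun j => (ω j.1).2.2 :=
      funext fun j => by rw [spliceZBefore_of_not_lt j.2.asymm]
    simp only [fst_spliceZBefore, snd_fst_spliceZBefore, hafter,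
      spliceZBefore_of_not_lt (lt_irrefl i)]
  · refine prod_spliceZBefore_mul q i fun j hj => ?_
    have hXY := congrFun (congrArg (fun t => t.1.2.1) hZ) ⟨j, hj⟩
    exact Prod.mk_inj.mp hXY

/-- For i.i.d. triples with pmf p(x)p(y|x)p(z|y) and M2 a function of (X^n, Y^n),
with U_i = (M2, X^{i-1}, Y^{i-1}, Z_{i+1}^n) we have the Markov chain
Z^{i-1} - (U_i, Z_i) - (X_i, Y_i). -/
theorem stmt_6 {𝒳 𝒴 𝒵 μ : Type*} [Fintype 𝒳] [Fintype 𝒴] [Fintype 𝒵] [Fintype μ]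
    (n : ℕ) (q : 𝒳 × 𝒴 × 𝒵 → ℝ) (hq : ∀ t, 0 ≤ q t) (hsum : ∑ t, q t = 1)
    (hmarkov : ∀ x y z, q (x, y, z) * (∑ x', ∑ z', q (x', y, z')) =
      (∑ z', q (x, y, z')) * (∑ x', q (x', y, z)))
    (m2 : (Fin n → 𝒳 × 𝒴) → μ) (i : Fin n) :
    condMI (fun ω : Fin n → 𝒳 × 𝒴 × 𝒵 => ∏ j, q (ω j))
      (fun ω => ((ω i).1, (ω i).2.1))
      (fun ω => (fun j : {j : Fin n // j < i} => (ω j.1).2.2))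
      (fun ω => ((m2 (fun j => ((ω j).1, (ω j).2.1)),
                  (fun j : {j : Fin n // j < i} => ((ω j.1).1, (ω j.1).2.1)),
                  (fun j : {j : Fin n // i < j} => (ω j.1).2.2)),
                 (ω i).2.2)) = 0 :=
  stmt_6_general n q m2 i
end

section
/- Let X, Y, Z, U be discrete random variables such that U - (X,Y) - Z is a Markov chain and X - Y - Z is a Markov chain. Then I(X,Y; U | Z) = I(X,Y; U) - I(Z; U) \ge I(X; U | Y). -/
open Finset

/-!
Every information quantity is an expectation `∑ ω, p ω * logb 2 (…)` of a log-ratio of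
probabilities of events containing `ω`; these are positive wherever `p ω > 0`, so identities
between information quantities reduce to identities between ratios. The chain `U - (X,Y) - Z`
gives `I(X,Y;U|Z) + I(Z;U) = I(X,Y;U)`. Together with `X - Y - Z` it yields `U - Y - Z`, hence
also `I(Y;U|Z) + I(Z;U) = I(Y;U)`. With the chain rule `I(X,Y;U) = I(X;U|Y) + I(Y;U)` this gives
`I(X,Y;U|Z) = I(X;U|Y) + I(Y;U|Z)`, and `I(Y;U|Z) ≥ 0` is Gibbs' inequality.
-/

lemma sub_div_log_le_mul_logb_div {b q r : ℝ} (hb : 1 < b) (hq : 0 ≤ q) (hr : 0 ≤ r)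
    (hqr : 0 < q → 0 < r) : (q - r) / Real.log b ≤ q * Real.logb b (q / r) := by
  have hlogb : 0 < Real.log b := Real.log_pos hb
  rcases hq.eq_or_lt with rfl | hq
  · rw [zero_sub, zero_mul]
    exact div_nonpos_of_nonpos_of_nonneg (neg_nonpos.2 hr) hlogb.le
  · have hr := hqr hq
    have key : 1 - (q / r)⁻¹ ≤ Real.log (q / r) := Real.one_sub_inv_le_log_of_pos (by positivity)
    rw [Real.logb, mul_div_assoc', div_le_div_iff_of_pos_right hlogb]
    calc q - r = q * (1 - (q / r)⁻¹) := by field_simp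
      _ ≤ q * Real.log (q / r) := by gcongr

lemma sum_mul_logb_div_nonneg {ι : Type*} [Fintype ι] {b : ℝ} (hb : 1 < b) {q r : ι → ℝ}
    (hq : ∀ i, 0 ≤ q i) (hr : ∀ i, 0 ≤ r i) (hqr : ∀ i, 0 < q i → 0 < r i)
    (hsum : ∑ i, r i ≤ ∑ i, q i) : 0 ≤ ∑ i, q i * Real.logb b (q i / r i) :=
  calc (0 : ℝ) ≤ (∑ i, q i - ∑ i, r i) / Real.log b :=
        div_nonneg (sub_nonneg.2 hsum) (Real.log_pos hb).le
    _ = ∑ i, (q i - r i) / Real.log b := by rw [← Finset.sum_sub_distrib, Finset.sum_div]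
    _ ≤ ∑ i, q i * Real.logb b (q i / r i) :=
        Finset.sum_le_sum fun i _ => sub_div_log_le_mul_logb_div hb (hq i) (hr i) (hqr i)

section InformationMeasures

variable {Ω : Type*} [Fintype Ω] {p : Ω → ℝ}

lemma pr_congr {E F : Ω → Prop} (h : ∀ ω, E ω ↔ F ω) : pr p E = pr p F :=
  congr_arg (pr p) (funext fun ω => propext (h ω))

lemma pr_nonneg (hp : ∀ ω, 0 ≤ p ω) (E : Ω → Prop) : 0 ≤ pr p E := by
  classical
  exact Finset.sum_nonneg fun ω _ => by split_ifs <;> simp [hp ω]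

lemma pr_mono (hp : ∀ ω, 0 ≤ p ω) {E F : Ω → Prop} (h : ∀ ω, E ω → F ω) :
    pr p E ≤ pr p F := by
  classical
  refine Finset.sum_le_sum fun ω _ => ?_
  by_cases hE : E ω
  · simp [hE, h ω hE]
  · by_cases hF : F ω <;> simp [hE, hF, hp ω]

lemma le_pr (hp : ∀ ω, 0 ≤ p ω) {E : Ω → Prop} {ω : Ω} (hω : E ω) : p ω ≤ pr p E := by
  classical
  calc p ω = if E ω then p ω else 0 := (if_pos hω).symm
    _ ≤ pr p E :=
      Finset.single_le_sum (f := fun ω => if E ω then p ω else 0)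
        (fun ω _ => by split_ifs <;> simp [hp ω]) (Finset.mem_univ ω)

lemma pr_pos_of_imp (hp : ∀ ω, 0 ≤ p ω) {E F : Ω → Prop} (h : ∀ ω, E ω → F ω)
    (hE : 0 < pr p E) : 0 < pr p F :=
  hE.trans_le (pr_mono hp h)

lemma pr_pos_of_pos (hp : ∀ ω, 0 ≤ p ω) {E : Ω → Prop} {ω : Ω} (hω : 0 < p ω) (hE : E ω) :
    0 < pr p E :=
  hω.trans_le (le_pr hp hE)

lemma sum_pr_eq_and {V : Type*} [Fintype V] (W : Ω → V) (E : Ω → Prop) :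
    ∑ v, pr p (fun ω => W ω = v ∧ E ω) = pr p E := by
  classical
  unfold pr
  rw [Finset.sum_comm]
  refine Finset.sum_congr rfl fun ω _ => ?_
  by_cases h : E ω <;> simp [h]

lemma sum_pr_and_eq_and {V : Type*} [Fintype V] (W : Ω → V) (E F : Ω → Prop) :
    ∑ v, pr p (fun ω => E ω ∧ W ω = v ∧ F ω) = pr p (fun ω => E ω ∧ F ω) := by
  rw [← sum_pr_eq_and W]
  exact Finset.sum_congr rfl fun _ _ => pr_congr fun _ => and_left_comm

lemma sum_pr_mul {V : Type*} [Fintype V] (W : Ω → V) (f : V → ℝ) :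
    ∑ v, pr p (fun ω => W ω = v) * f v = ∑ ω, p ω * f (W ω) := by
  classical
  simp only [pr, Finset.sum_mul, ite_mul, zero_mul]
  rw [Finset.sum_comm]
  simp

lemma sum_sum_pr_mul {α β : Type*} [Fintype α] [Fintype β] (A : Ω → α) (B : Ω → β)
    (f : α → β → ℝ) :
    ∑ a, ∑ b, pr p (fun ω => A ω = a ∧ B ω = b) * f a b = ∑ ω, p ω * f (A ω) (B ω) := by
  rw [← sum_pr_mul (fun ω => (A ω, B ω)) (fun ab => f ab.1 ab.2), Fintype.sum_prod_type]
  simp only [Prod.mk.injEq]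

lemma sum_sum_sum_pr_mul {α β γ : Type*} [Fintype α] [Fintype β] [Fintype γ] (A : Ω → α)
    (B : Ω → β) (C : Ω → γ) (f : α → β → γ → ℝ) :
    ∑ a, ∑ b, ∑ c, pr p (fun ω => A ω = a ∧ B ω = b ∧ C ω = c) * f a b c =
      ∑ ω, p ω * f (A ω) (B ω) (C ω) := by
  rw [← sum_sum_pr_mul A (fun ω => (B ω, C ω)) (fun a bc => f a bc.1 bc.2)]
  simp only [Fintype.sum_prod_type, Prod.mk.injEq]

lemma sum_mul_congr_of_pos (hp : ∀ ω, 0 ≤ p ω) {f g : Ω → ℝ}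
    (h : ∀ ω, 0 < p ω → f ω = g ω) : ∑ ω, p ω * f ω = ∑ ω, p ω * g ω := by
  refine Finset.sum_congr rfl fun ω _ => ?_
  rcases (hp ω).eq_or_lt with h0 | hpos
  · simp [← h0]
  · rw [h ω hpos]

variable {α β γ : Type*}

/-- `A - B - C`, in the form `P(a,b,c) P(b) = P(a,b) P(b,c)`, which needs no division. -/
def MarkovChain (p : Ω → ℝ) (A : Ω → α) (B : Ω → β) (C : Ω → γ) : Prop :=
  ∀ a b c, pr p (fun ω => A ω = a ∧ B ω = b ∧ C ω = c) * pr p (fun ω => B ω = b) =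
    pr p (fun ω => A ω = a ∧ B ω = b) * pr p (fun ω => B ω = b ∧ C ω = c)

lemma MarkovChain.of_prod {δ : Type*} [Fintype β] (hp : ∀ ω, 0 ≤ p ω) {A : Ω → α}
    {B : Ω → β} {C : Ω → γ} {D : Ω → δ}
    (hA : MarkovChain p A (fun ω => (B ω, C ω)) D) (hB : MarkovChain p B C D) :
    MarkovChain p A C D := by
  intro a c d
  have hfiber : ∀ b,
      pr p (fun ω => A ω = a ∧ B ω = b ∧ C ω = c ∧ D ω = d) * pr p (fun ω => C ω = c) =
        pr p (fun ω => A ω = a ∧ B ω = b ∧ C ω = c) * pr p (fun ω => C ω = c ∧ D ω = d) := by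
    intro b
    have hAbc := hA a (b, c) d
    simp only [Prod.mk.injEq, and_assoc] at hAbc
    rcases (pr_nonneg hp fun ω => B ω = b ∧ C ω = c).eq_or_lt with hbc | hbc
    · have h0 : ∀ E : Ω → Prop, (∀ ω, E ω → B ω = b ∧ C ω = c) → pr p E = 0 :=
        fun E hE => le_antisymm (hbc ▸ pr_mono hp hE) (pr_nonneg hp E)
      rw [h0 (fun ω => A ω = a ∧ B ω = b ∧ C ω = c ∧ D ω = d) fun ω h => ⟨h.2.1, h.2.2.1⟩,
        h0 (fun ω => A ω = a ∧ B ω = b ∧ C ω = c) fun ω h => h.2, zero_mul, zero_mul]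
    · refine mul_right_cancel₀ hbc.ne' ?_
      linear_combination pr p (fun ω => C ω = c) * hAbc +
        pr p (fun ω => A ω = a ∧ B ω = b ∧ C ω = c) * hB b c d
  rw [← sum_pr_and_eq_and B, ← sum_pr_and_eq_and B, Finset.sum_mul, Finset.sum_mul]
  exact Finset.sum_congr rfl fun b _ => hfiber b

variable [Fintype α] [Fintype β] [Fintype γ]

lemma mutI_eq_sum (A : Ω → α) (B : Ω → β) :
    mutI p A B = ∑ ω, p ω * Real.logb 2 (pr p (fun ω' => A ω' = A ω ∧ B ω' = B ω) /
      (pr p (fun ω' => A ω' = A ω) * pr p (fun ω' => B ω' = B ω))) :=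
  sum_sum_pr_mul A B _

lemma condMI_eq_sum (A : Ω → α) (B : Ω → β) (C : Ω → γ) :
    condMI p A B C = ∑ ω, p ω * Real.logb 2
      ((pr p (fun ω' => A ω' = A ω ∧ B ω' = B ω ∧ C ω' = C ω) * pr p (fun ω' => C ω' = C ω)) /
        (pr p (fun ω' => A ω' = A ω ∧ C ω' = C ω) * pr p (fun ω' => B ω' = B ω ∧ C ω' = C ω))) :=
  sum_sum_sum_pr_mul A B C _

lemma sum_pr_mul_pr_div_pr (A : Ω → α) (B : Ω → β) (C : Ω → γ) :
    ∑ a, ∑ b, ∑ c, pr p (fun ω => A ω = a ∧ C ω = c) * pr p (fun ω => B ω = b ∧ C ω = c) /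
      pr p (fun ω => C ω = c) = ∑ ω, p ω := by
  calc _ = ∑ c, (∑ a, pr p (fun ω => A ω = a ∧ C ω = c)) *
        (∑ b, pr p (fun ω => B ω = b ∧ C ω = c)) / pr p (fun ω => C ω = c) := by
        simp only [Finset.sum_mul_sum, Finset.sum_div]
        conv_rhs => rw [Finset.sum_comm]
        exact Finset.sum_congr rfl fun _ _ => Finset.sum_comm
    _ = ∑ c, pr p (fun ω => C ω = c) * 1 := by
        simp only [sum_pr_eq_and, mul_self_div_self, mul_one]
    _ = ∑ ω, p ω := by simpa only [mul_one] using sum_pr_mul C fun _ => 1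

lemma condMI_nonneg (hp : ∀ ω, 0 ≤ p ω) (A : Ω → α) (B : Ω → β) (C : Ω → γ) :
    0 ≤ condMI p A B C := by
  have hq_sum : ∑ a, ∑ b, ∑ c, pr p (fun ω => A ω = a ∧ B ω = b ∧ C ω = c) = ∑ ω, p ω := by
    simpa only [mul_one] using sum_sum_sum_pr_mul (p := p) A B C (fun _ _ _ => 1)
  have := sum_mul_logb_div_nonneg (ι := α × β × γ) one_lt_two
    (q := fun i => pr p (fun ω => A ω = i.1 ∧ B ω = i.2.1 ∧ C ω = i.2.2))
    (r := fun i => pr p (fun ω => A ω = i.1 ∧ C ω = i.2.2) *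
      pr p (fun ω => B ω = i.2.1 ∧ C ω = i.2.2) / pr p (fun ω => C ω = i.2.2))
    (fun i => pr_nonneg hp _)
    (fun i => div_nonneg (mul_nonneg (pr_nonneg hp _) (pr_nonneg hp _)) (pr_nonneg hp _))
    (fun i hi => div_pos
      (mul_pos (pr_pos_of_imp hp (fun ω h => ⟨h.1, h.2.2⟩) hi)
        (pr_pos_of_imp hp (fun ω h => h.2) hi))
      (pr_pos_of_imp hp (fun ω h => h.2.2) hi))
    (by simp only [Fintype.sum_prod_type, sum_pr_mul_pr_div_pr, hq_sum, le_refl])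
  simpa only [condMI, Fintype.sum_prod_type, div_div_eq_mul_div] using this

lemma condMI_add_mutI_of_markovChain (hp : ∀ ω, 0 ≤ p ω) {A : Ω → α} {B : Ω → β}
    {C : Ω → γ} (h : MarkovChain p A B C) : condMI p B A C + mutI p C A = mutI p B A := by
  rw [condMI_eq_sum, mutI_eq_sum, mutI_eq_sum, ← Finset.sum_add_distrib]
  simp only [← mul_add]
  refine sum_mul_congr_of_pos hp fun ω hω => ?_
  have hBAC : pr p (fun ω' => B ω' = B ω ∧ A ω' = A ω ∧ C ω' = C ω) =
      pr p (fun ω' => A ω' = A ω ∧ B ω' = B ω ∧ C ω' = C ω) := pr_congr fun _ => and_left_comm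
  have hBA : pr p (fun ω' => B ω' = B ω ∧ A ω' = A ω) =
      pr p (fun ω' => A ω' = A ω ∧ B ω' = B ω) := pr_congr fun _ => and_comm
  have hCA : pr p (fun ω' => C ω' = C ω ∧ A ω' = A ω) =
      pr p (fun ω' => A ω' = A ω ∧ C ω' = C ω) := pr_congr fun _ => and_comm
  rw [hBAC, hBA, hCA]
  have hpos : ∀ E : Ω → Prop, E ω → 0 < pr p E := fun E hE => pr_pos_of_pos hp hω hE
  have hABC := hpos (fun ω' => A ω' = A ω ∧ B ω' = B ω ∧ C ω' = C ω) ⟨rfl, rfl, rfl⟩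
  have hAB := hpos (fun ω' => A ω' = A ω ∧ B ω' = B ω) ⟨rfl, rfl⟩
  have hAC := hpos (fun ω' => A ω' = A ω ∧ C ω' = C ω) ⟨rfl, rfl⟩
  have hBC := hpos (fun ω' => B ω' = B ω ∧ C ω' = C ω) ⟨rfl, rfl⟩
  have hA := hpos (fun ω' => A ω' = A ω) rfl
  have hB := hpos (fun ω' => B ω' = B ω) rfl
  have hC := hpos (fun ω' => C ω' = C ω) rfl
  rw [← Real.logb_mul (by positivity) (by positivity)]
  congr 1
  field_simp
  linear_combination h (A ω) (B ω) (C ω)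

lemma mutI_prod_eq_condMI_add_mutI (hp : ∀ ω, 0 ≤ p ω) (A : Ω → α) (B : Ω → β) (C : Ω → γ) :
    mutI p (fun ω => (A ω, B ω)) C = condMI p A C B + mutI p B C := by
  rw [condMI_eq_sum, mutI_eq_sum, mutI_eq_sum, ← Finset.sum_add_distrib]
  simp only [← mul_add, Prod.mk.injEq, and_assoc]
  refine sum_mul_congr_of_pos hp fun ω hω => ?_
  have hACB : pr p (fun ω' => A ω' = A ω ∧ C ω' = C ω ∧ B ω' = B ω) =
      pr p (fun ω' => A ω' = A ω ∧ B ω' = B ω ∧ C ω' = C ω) :=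
    pr_congr fun _ => and_congr_right' and_comm
  have hCB : pr p (fun ω' => C ω' = C ω ∧ B ω' = B ω) =
      pr p (fun ω' => B ω' = B ω ∧ C ω' = C ω) := pr_congr fun _ => and_comm
  rw [hACB, hCB]
  have hpos : ∀ E : Ω → Prop, E ω → 0 < pr p E := fun E hE => pr_pos_of_pos hp hω hE
  have hABC := hpos (fun ω' => A ω' = A ω ∧ B ω' = B ω ∧ C ω' = C ω) ⟨rfl, rfl, rfl⟩
  have hAB := hpos (fun ω' => A ω' = A ω ∧ B ω' = B ω) ⟨rfl, rfl⟩
  have hBC := hpos (fun ω' => B ω' = B ω ∧ C ω' = C ω) ⟨rfl, rfl⟩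
  have hB := hpos (fun ω' => B ω' = B ω) rfl
  have hC := hpos (fun ω' => C ω' = C ω) rfl
  rw [← Real.logb_mul (by positivity) (by positivity)]
  congr 1
  field_simp

end InformationMeasures

theorem stmt_8_general {Ω 𝒳 𝒴 𝒵 𝒰 : Type*} [Fintype Ω] [Fintype 𝒳] [Fintype 𝒴] [Fintype 𝒵]
    [Fintype 𝒰]
    (p : Ω → ℝ) (hp : ∀ ω, 0 ≤ p ω)
    (X : Ω → 𝒳) (Y : Ω → 𝒴) (Z : Ω → 𝒵) (U : Ω → 𝒰)
    (hmarkovU : ∀ u x y z,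
      pr p (fun ω => U ω = u ∧ X ω = x ∧ Y ω = y ∧ Z ω = z) *
        pr p (fun ω => X ω = x ∧ Y ω = y) =
      pr p (fun ω => U ω = u ∧ X ω = x ∧ Y ω = y) *
        pr p (fun ω => X ω = x ∧ Y ω = y ∧ Z ω = z))
    (hmarkovX : ∀ x y z,
      pr p (fun ω => X ω = x ∧ Y ω = y ∧ Z ω = z) * pr p (fun ω => Y ω = y) =
      pr p (fun ω => X ω = x ∧ Y ω = y) * pr p (fun ω => Y ω = y ∧ Z ω = z)) :
    condMI p (fun ω => (X ω, Y ω)) U Z =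
        mutI p (fun ω => (X ω, Y ω)) U - mutI p Z U ∧
      condMI p (fun ω => (X ω, Y ω)) U Z ≥ condMI p X U Y := by
  have hUXYZ : MarkovChain p U (fun ω => (X ω, Y ω)) Z := by
    rintro u ⟨x, y⟩ z
    simpa only [Prod.mk.injEq, and_assoc] using hmarkovU u x y z
  have hUYZ : MarkovChain p U Y Z := hUXYZ.of_prod hp hmarkovX
  have hXY := condMI_add_mutI_of_markovChain hp hUXYZ
  have hY := condMI_add_mutI_of_markovChain hp hUYZ
  have hchain := mutI_prod_eq_condMI_add_mutI hp X Y U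
  have hgibbs := condMI_nonneg hp Y U Z
  constructor <;> linarith

/-- If U - (X,Y) - Z and X - Y - Z are Markov chains then
I(X,Y; U|Z) = I(X,Y; U) - I(Z; U) ≥ I(X; U|Y). -/
theorem stmt_8 {Ω 𝒳 𝒴 𝒵 𝒰 : Type*} [Fintype Ω] [Fintype 𝒳] [Fintype 𝒴] [Fintype 𝒵]
    [Fintype 𝒰]
    (p : Ω → ℝ) (hp : ∀ ω, 0 ≤ p ω) (hsum : ∑ ω, p ω = 1)
    (X : Ω → 𝒳) (Y : Ω → 𝒴) (Z : Ω → 𝒵) (U : Ω → 𝒰)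
    (hmarkovU : ∀ u x y z,
      pr p (fun ω => U ω = u ∧ X ω = x ∧ Y ω = y ∧ Z ω = z) *
        pr p (fun ω => X ω = x ∧ Y ω = y) =
      pr p (fun ω => U ω = u ∧ X ω = x ∧ Y ω = y) *
        pr p (fun ω => X ω = x ∧ Y ω = y ∧ Z ω = z))
    (hmarkovX : ∀ x y z,
      pr p (fun ω => X ω = x ∧ Y ω = y ∧ Z ω = z) * pr p (fun ω => Y ω = y) =
      pr p (fun ω => X ω = x ∧ Y ω = y) * pr p (fun ω => Y ω = y ∧ Z ω = z)) :
    condMI p (fun ω => (X ω, Y ω)) U Z =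
        mutI p (fun ω => (X ω, Y ω)) U - mutI p Z U ∧
      condMI p (fun ω => (X ω, Y ω)) U Z ≥ condMI p X U Y :=
  stmt_8_general p hp X Y Z U hmarkovU hmarkovX
end
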